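/- arXiv:1811.03155 — 4 statements merged into one kernel-verified Lean document; each statement's English description precedes it below -/
import Mathlib

section
/- Let P and Q be rank-one orthogonal projections on a finite-dimensional complex Hilbert space H. Then for every Hermitian operator A on H, |tr(A(P−Q))| ≤ √2 · ‖P−Q‖₂ · (tr(A²(P+Q)))^{1/2}, where ‖·‖₂ denotes the Hilbert–Schmidt norm. -/
open Matrix

/-- The Hilbert–Schmidt (Frobenius) norm of a complex matrix. -/
noncomputable def hsNorm {n : ℕ} (X : Matrix (Fin n) (Fin n) ℂ) : ℝ :=
  Real.sqrt ((X * Xᴴ).trace.re)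

lemma trace_mul_conjTranspose_re {n : ℕ} (X : Matrix (Fin n) (Fin n) ℂ) :
    (X * Xᴴ).trace.re = ∑ i, ∑ j, ‖X i j‖ ^ 2 := by
  simp only [Matrix.trace, Matrix.diag, Matrix.mul_apply, Matrix.conjTranspose_apply]
  rw [Complex.re_sum]
  refine Finset.sum_congr rfl fun i _ => ?_
  rw [Complex.re_sum]
  refine Finset.sum_congr rfl fun j _ => ?_
  rw [show star (X i j) = (starRingEnd ℂ) (X i j) from rfl, Complex.mul_conj,
    Complex.ofReal_re, Complex.normSq_eq_norm_sq]

lemma trace_mul_conjTranspose_re_nonneg {n : ℕ} (X : Matrix (Fin n) (Fin n) ℂ) :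
    0 ≤ (X * Xᴴ).trace.re := by
  rw [trace_mul_conjTranspose_re]
  positivity

lemma hsNorm_sq {n : ℕ} (X : Matrix (Fin n) (Fin n) ℂ) :
    hsNorm X ^ 2 = (X * Xᴴ).trace.re :=
  Real.sq_sqrt (trace_mul_conjTranspose_re_nonneg X)

lemma hsNorm_nonneg {n : ℕ} (X : Matrix (Fin n) (Fin n) ℂ) : 0 ≤ hsNorm X :=
  Real.sqrt_nonneg _

/-- Cauchy–Schwarz for the trace. -/
lemma trace_cs {n : ℕ} (B C : Matrix (Fin n) (Fin n) ℂ) :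
    ‖(B * C).trace‖ ≤ hsNorm B * hsNorm C := by
  set x : EuclideanSpace ℂ (Fin n × Fin n) := WithLp.toLp 2 (fun p : Fin n × Fin n => star (B p.1 p.2)) with hx
  set y : EuclideanSpace ℂ (Fin n × Fin n) := WithLp.toLp 2 (fun p : Fin n × Fin n => C p.2 p.1) with hy
  have hinner : inner ℂ x y = (B * C).trace := by
    simp only [PiLp.inner_apply, RCLike.inner_apply, hx, hy, PiLp.toLp_apply]
    rw [Fintype.sum_prod_type]
    simp only [Matrix.trace, Matrix.diag, Matrix.mul_apply]
    refine Finset.sum_congr rfl fun i _ => Finset.sum_congr rfl fun j _ => ?_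
    rw [starRingEnd_apply, star_star, mul_comm]
  have hxnorm : ‖x‖ = hsNorm B := by
    rw [EuclideanSpace.norm_eq, hsNorm, trace_mul_conjTranspose_re]
    congr 1
    rw [Fintype.sum_prod_type]
    simp [hx, norm_star]
  have hynorm : ‖y‖ = hsNorm C := by
    rw [EuclideanSpace.norm_eq, hsNorm, trace_mul_conjTranspose_re]
    congr 1
    rw [Fintype.sum_prod_type, Finset.sum_comm]
  calc ‖(B * C).trace‖ = ‖inner ℂ x y‖ := by rw [hinner]
    _ ≤ ‖x‖ * ‖y‖ := norm_inner_le_norm x y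
    _ = hsNorm B * hsNorm C := by rw [hxnorm, hynorm]

theorem stmt0 {n : ℕ} (P Q A : Matrix (Fin n) (Fin n) ℂ)
    (hP : P.IsHermitian) (hPidem : P * P = P) (hPrank : P.rank = 1)
    (hQ : Q.IsHermitian) (hQidem : Q * Q = Q) (hQrank : Q.rank = 1)
    (hA : A.IsHermitian) :
    ‖(A * (P - Q)).trace‖ ≤
      Real.sqrt 2 * hsNorm (P - Q) * Real.sqrt ((A * A * (P + Q)).trace.re) := by
  set a : ℝ := (A * A * P).trace.re with haa
  set b : ℝ := (A * A * Q).trace.re with hbb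
  have hAP' : ((A * P) * (A * P)ᴴ).trace = (A * A * P).trace := by
    rw [Matrix.conjTranspose_mul, hP.eq, hA.eq]
    calc (A * P * (P * A)).trace = (A * (P * P) * A).trace := by
          rw [mul_assoc, mul_assoc, mul_assoc]
      _ = (A * P * A).trace := by rw [hPidem]
      _ = (A * A * P).trace := by rw [Matrix.trace_mul_cycle]
  have hQA' : ((Q * A) * (Q * A)ᴴ).trace = (A * A * Q).trace := by
    rw [Matrix.conjTranspose_mul, hQ.eq, hA.eq]
    calc (Q * A * (A * Q)).trace = (Q * (A * A) * Q).trace := by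
          rw [mul_assoc, mul_assoc, mul_assoc]
      _ = ((Q * Q) * (A * A)).trace := by rw [Matrix.trace_mul_cycle, mul_assoc]
      _ = (A * A * Q).trace := by rw [hQidem, Matrix.trace_mul_comm]
  have hAP : hsNorm (A * P) = Real.sqrt a := by rw [hsNorm, hAP']
  have hQA : hsNorm (Q * A) = Real.sqrt b := by rw [hsNorm, hQA']
  have ha : 0 ≤ a := by
    rw [haa, ← hAP']; exact trace_mul_conjTranspose_re_nonneg _
  have hb : 0 ≤ b := by
    rw [hbb, ← hQA']; exact trace_mul_conjTranspose_re_nonneg _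
  -- the trace identity
  have key : (A * (P - Q)).trace
      = ((P - Q) * (A * P)).trace + ((P - Q) * (Q * A)).trace := by
    rw [Matrix.trace_mul_comm (P - Q) (A * P), Matrix.trace_mul_comm (P - Q) (Q * A)]
    simp only [Matrix.mul_sub, Matrix.sub_mul, Matrix.trace_sub]
    have c1 : (A * P * P).trace = (A * P).trace := by rw [mul_assoc, hPidem]
    have c2 : (Q * A * P).trace = (A * P * Q).trace := by
      rw [Matrix.trace_mul_cycle, Matrix.trace_mul_cycle]
    have c3 : (Q * A * Q).trace = (A * Q).trace := by
      rw [Matrix.trace_mul_cycle, hQidem, Matrix.trace_mul_comm]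
    rw [c1, c2, c3]
    ring
  have cs1 := trace_cs (P - Q) (A * P)
  have cs2 := trace_cs (P - Q) (Q * A)
  have hsum : (A * A * (P + Q)).trace.re = a + b := by
    rw [haa, hbb, Matrix.mul_add, Matrix.trace_add, Complex.add_re]
  rw [hsum]
  have step1 : ‖(A * (P - Q)).trace‖
      ≤ hsNorm (P - Q) * (Real.sqrt a + Real.sqrt b) := by
    rw [key]
    calc ‖((P - Q) * (A * P)).trace + ((P - Q) * (Q * A)).trace‖
        ≤ ‖((P - Q) * (A * P)).trace‖
          + ‖((P - Q) * (Q * A)).trace‖ := norm_add_le _ _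
      _ ≤ hsNorm (P - Q) * hsNorm (A * P) + hsNorm (P - Q) * hsNorm (Q * A) :=
          add_le_add cs1 cs2
      _ = hsNorm (P - Q) * (Real.sqrt a + Real.sqrt b) := by
          rw [hAP, hQA]; ring
  have step2 : Real.sqrt a + Real.sqrt b ≤ Real.sqrt 2 * Real.sqrt (a + b) := by
    have hab : 2 * (Real.sqrt a * Real.sqrt b) ≤ a + b := by
      nlinarith [sq_nonneg (Real.sqrt a - Real.sqrt b), Real.sq_sqrt ha, Real.sq_sqrt hb]
    have h2 : (Real.sqrt a + Real.sqrt b) ^ 2 ≤ (Real.sqrt 2 * Real.sqrt (a + b)) ^ 2 := by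
      rw [mul_pow, Real.sq_sqrt (by norm_num : (0:ℝ) ≤ 2),
        Real.sq_sqrt (by linarith : (0:ℝ) ≤ a + b)]
      nlinarith [Real.sq_sqrt ha, Real.sq_sqrt hb]
    have h3 := Real.sqrt_le_sqrt h2
    rwa [Real.sqrt_sq (by positivity), Real.sqrt_sq (by positivity)] at h3
  calc ‖(A * (P - Q)).trace‖
      ≤ hsNorm (P - Q) * (Real.sqrt a + Real.sqrt b) := step1
    _ ≤ hsNorm (P - Q) * (Real.sqrt 2 * Real.sqrt (a + b)) :=
        mul_le_mul_of_nonneg_left step2 (hsNorm_nonneg _)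
    _ = Real.sqrt 2 * hsNorm (P - Q) * Real.sqrt (a + b) := by ring
end

section
/- Let Ω be a finite set with probability measure α, H an n-dimensional complex Hilbert space, and F : Ω → S(H) a map to density operators such that n·∑_s F(s)·α(s) = 1 (identity). Define B : functions on Ω → functions on Ω by (Bφ)(t) = n·∑_s φ(s)·tr(F(s)F(t))·α(s). Then B is self-adjoint with respect to the inner product (φ,ψ) = ∑_s φ(s)ψ(s)α(s), B(1) = 1, and all eigenvalues of B lie in [0,1]. -/
open Matrix
open scoped ComplexOrder

lemma trace_nonneg_of_psd {m : ℕ} {M : Matrix (Fin m) (Fin m) ℂ} (h : M.PosSemidef) :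
    0 ≤ M.trace := by
  rw [Matrix.trace]
  apply Finset.sum_nonneg
  intro i _
  exact h.diag_nonneg

lemma trace_mul_psd_nonneg {m : ℕ} {M N : Matrix (Fin m) (Fin m) ℂ}
    (hM : M.PosSemidef) (hN : N.PosSemidef) : 0 ≤ (M * N).trace := by
  open scoped MatrixOrder Matrix.Norms.L2Operator in
  obtain ⟨C, hC⟩ := CStarAlgebra.nonneg_iff_eq_star_mul_self.mp hM.nonneg
  rw [hC, mul_assoc, Matrix.trace_mul_comm]
  exact trace_nonneg_of_psd (hN.mul_mul_conjTranspose_same C)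

theorem stmt3 {Ω : Type*} [Fintype Ω] {n : ℕ} (hn : 0 < n)
    (α : Ω → ℝ) (hα0 : ∀ s, 0 ≤ α s) (hα1 : ∑ s, α s = 1)
    (F : Ω → Matrix (Fin n) (Fin n) ℂ)
    (hFpsd : ∀ s, (F s).PosSemidef) (hFtr : ∀ s, (F s).trace = 1)
    (hPOVM : (n : ℂ) • ∑ s, (α s : ℂ) • F s = 1)
    (B : (Ω → ℝ) → (Ω → ℝ))
    (hB : ∀ φ t, B φ t = n * ∑ s, φ s * ((F s * F t).trace.re) * α s) :
    (∀ φ ψ : Ω → ℝ, ∑ t, B φ t * ψ t * α t = ∑ t, φ t * B ψ t * α t) ∧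
    (B (fun _ => 1) = fun _ => 1) ∧
    (∀ (μ : ℝ) (φ : Ω → ℝ), (∑ s, (φ s) ^ 2 * α s ≠ 0) → B φ = μ • φ →
      0 ≤ μ ∧ μ ≤ 1) := by
  have hsym : ∀ s t : Ω, ((F s * F t).trace).re = ((F t * F s).trace).re := by
    intro s t; rw [Matrix.trace_mul_comm]
  have hnn : ∀ s t : Ω, 0 ≤ ((F s * F t).trace).re := by
    intro s t
    exact (Complex.le_def.mp (trace_mul_psd_nonneg (hFpsd s) (hFpsd t))).1
  -- row sums
  have hrow : ∀ s, ∑ t, (n:ℝ) * ((F s * F t).trace).re * α t = 1 := by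
    intro s
    have h1 : F s * ((n : ℂ) • ∑ t, (α t : ℂ) • F t) = F s := by rw [hPOVM, mul_one]
    have h2 : (∑ t, (n : ℂ) * ((F s * F t).trace * (α t : ℂ))) = 1 := by
      calc (∑ t, (n : ℂ) * ((F s * F t).trace * (α t : ℂ)))
          = (F s * ((n : ℂ) • ∑ t, (α t : ℂ) • F t)).trace := by
            rw [Matrix.mul_smul, Matrix.mul_sum, Matrix.trace_smul, Matrix.trace_sum]
            rw [smul_eq_mul, Finset.mul_sum]
            congr 1; funext t
            rw [Matrix.mul_smul, Matrix.trace_smul, smul_eq_mul]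
            ring
        _ = 1 := by rw [h1, hFtr]
    have h3 := congrArg Complex.re h2
    rw [Complex.re_sum] at h3
    simp only [Complex.mul_re, Complex.natCast_re, Complex.natCast_im, Complex.mul_im,
      Complex.ofReal_re, Complex.ofReal_im, Complex.one_re, mul_zero, zero_mul, sub_zero,
      add_zero, zero_sub, neg_zero] at h3
    convert h3 using 2 with t
    ring
  -- the quadratic form identity
  have key : ∀ φ ψ : Ω → ℝ, ∑ t, B φ t * ψ t * α t
      = ∑ t, ∑ s, (n:ℝ) * ((F s * F t).trace).re * α s * α t * (φ s * ψ t) := by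
    intro φ ψ
    refine Finset.sum_congr rfl fun t _ => ?_
    rw [hB, Finset.mul_sum, Finset.sum_mul, Finset.sum_mul]
    exact Finset.sum_congr rfl fun s _ => by ring
  refine ⟨?_, ?_, ?_⟩
  · -- self-adjointness
    intro φ ψ
    rw [key φ ψ]
    have : ∑ t, φ t * B ψ t * α t = ∑ t, B ψ t * φ t * α t :=
      Finset.sum_congr rfl fun t _ => by ring
    rw [this, key ψ φ, Finset.sum_comm]
    refine Finset.sum_congr rfl fun t _ => Finset.sum_congr rfl fun s _ => ?_
    rw [hsym s t]; ring
  · -- B 1 = 1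
    funext t
    rw [hB]
    calc (n:ℝ) * ∑ s, (1:ℝ) * ((F s * F t).trace).re * α s
        = ∑ s, (n:ℝ) * ((F t * F s).trace).re * α s := by
          rw [Finset.mul_sum]
          exact Finset.sum_congr rfl fun s _ => by rw [hsym s t]; ring
      _ = 1 := hrow t
  · -- eigenvalues in [0,1]
    intro μ φ hS0 heig
    set S := ∑ s, (φ s) ^ 2 * α s with hSdef
    have hSnn : 0 ≤ S := Finset.sum_nonneg fun s _ => mul_nonneg (sq_nonneg _) (hα0 s)
    have hSpos : 0 < S := lt_of_le_of_ne hSnn (Ne.symm hS0)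
    have hform : ∑ t, B φ t * φ t * α t = μ * S := by
      rw [heig, hSdef, Finset.mul_sum]
      refine Finset.sum_congr rfl fun t _ => ?_
      simp only [Pi.smul_apply, smul_eq_mul]; ring
    have hμS : μ * S = ∑ t, ∑ s, (n:ℝ) * ((F s * F t).trace).re * α s * α t * (φ s * φ t) := by
      rw [← hform, key φ φ]
    constructor
    · -- lower bound via Gram positivity
      set c : Ω → ℝ := fun s => φ s * α s with hc
      set A : Matrix (Fin n) (Fin n) ℂ := ∑ s, ((c s : ℝ) : ℂ) • F s with hAdef
      have hAH : Aᴴ = A := by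
        rw [hAdef, Matrix.conjTranspose_sum]
        refine Finset.sum_congr rfl fun s _ => ?_
        rw [Matrix.conjTranspose_smul, (hFpsd s).1.eq, Complex.star_def, Complex.conj_ofReal]
      have h0 : 0 ≤ (A * A).trace.re := by
        have := trace_nonneg_of_psd (Matrix.posSemidef_conjTranspose_mul_self A)
        rw [hAH] at this
        exact (Complex.le_def.mp this).1
      have hAA : (A * A).trace.re = ∑ s, ∑ t, (c s * c t) * ((F s * F t).trace).re := by
        have e : A * A = ∑ s, ∑ t, (((c s * c t : ℝ)) : ℂ) • (F s * F t) := by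
          rw [hAdef, Finset.sum_mul_sum]
          refine Finset.sum_congr rfl fun s _ => Finset.sum_congr rfl fun t _ => ?_
          rw [Matrix.smul_mul, Matrix.mul_smul, smul_smul, ← Complex.ofReal_mul]
        rw [e, Matrix.trace_sum]
        rw [Complex.re_sum]
        refine Finset.sum_congr rfl fun s _ => ?_
        rw [Matrix.trace_sum, Complex.re_sum]
        refine Finset.sum_congr rfl fun t _ => ?_
        rw [Matrix.trace_smul, smul_eq_mul, Complex.mul_re]
        simp
      have hge : 0 ≤ μ * S := by
        rw [hμS, Finset.sum_comm]
        have : ∑ s, ∑ t, (n:ℝ) * ((F s * F t).trace).re * α s * α t * (φ s * φ t)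
            = (n:ℝ) * ∑ s, ∑ t, (c s * c t) * ((F s * F t).trace).re := by
          rw [Finset.mul_sum]
          refine Finset.sum_congr rfl fun s _ => ?_
          rw [Finset.mul_sum]
          exact Finset.sum_congr rfl fun t _ => by rw [hc]; ring
        rw [this, ← hAA]
        positivity
      exact nonneg_of_mul_nonneg_right (by linarith [hge]) hSpos
    · -- upper bound
      have hwnn : ∀ s t : Ω, 0 ≤ (n:ℝ) * ((F s * F t).trace).re * α s * α t :=
        fun s t => mul_nonneg (mul_nonneg (mul_nonneg (by positivity) (hnn s t)) (hα0 s)) (hα0 t)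
      have e1 : ∑ t, ∑ s, (n:ℝ) * ((F s * F t).trace).re * α s * α t * φ s ^ 2 = S := by
        rw [Finset.sum_comm, hSdef]
        refine Finset.sum_congr rfl fun s _ => ?_
        have : ∑ t, (n:ℝ) * ((F s * F t).trace).re * α s * α t * φ s ^ 2
            = (φ s ^ 2 * α s) * ∑ t, (n:ℝ) * ((F s * F t).trace).re * α t := by
          rw [Finset.mul_sum]; exact Finset.sum_congr rfl fun t _ => by ring
        rw [this, hrow s, mul_one]
      have e2 : ∑ t, ∑ s, (n:ℝ) * ((F s * F t).trace).re * α s * α t * φ t ^ 2 = S := by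
        rw [hSdef]
        refine Finset.sum_congr rfl fun t _ => ?_
        have : ∑ s, (n:ℝ) * ((F s * F t).trace).re * α s * α t * φ t ^ 2
            = (φ t ^ 2 * α t) * ∑ s, (n:ℝ) * ((F t * F s).trace).re * α s := by
          rw [Finset.mul_sum]
          refine Finset.sum_congr rfl fun s _ => ?_
          rw [hsym t s]; ring
        rw [this, hrow t, mul_one]
      have hub : μ * S ≤ S := by
        rw [hμS]
        calc ∑ t, ∑ s, (n:ℝ) * ((F s * F t).trace).re * α s * α t * (φ s * φ t)
            ≤ ∑ t, ∑ s, (n:ℝ) * ((F s * F t).trace).re * α s * α t * ((φ s ^ 2 + φ t ^ 2) / 2) := by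
              refine Finset.sum_le_sum fun t _ => Finset.sum_le_sum fun s _ => ?_
              apply mul_le_mul_of_nonneg_left _ (hwnn s t)
              nlinarith [sq_nonneg (φ s - φ t)]
          _ = (∑ t, ∑ s, (n:ℝ) * ((F s * F t).trace).re * α s * α t * φ s ^ 2) / 2
              + (∑ t, ∑ s, (n:ℝ) * ((F s * F t).trace).re * α s * α t * φ t ^ 2) / 2 := by
              rw [Finset.sum_div, Finset.sum_div, ← Finset.sum_add_distrib]
              refine Finset.sum_congr rfl fun t _ => ?_
              rw [Finset.sum_div, Finset.sum_div, ← Finset.sum_add_distrib]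
              exact Finset.sum_congr rfl fun s _ => by ring
          _ = S := by rw [e1, e2]; ring
      exact le_of_mul_le_mul_right (by linarith [hub]) hSpos
end

section
/- Let G be a finite group, ρ a nontrivial irreducible unitary representation with character χ_ρ, and φ a nontrivial irreducible unitary representation with dimension d_φ. If (1/(d_φ·|G|))·∑_{s∈G} |χ_ρ(s)|²·χ_φ(s) = 1, then for every s ∈ G with χ_ρ(s) ≠ 0 one has χ_φ(s) = d_φ (equivalently φ(s) is the identity). -/
open Module LinearMap

lemma aux_trace {V : Type} [AddCommGroup V] [Module ℂ V] [FiniteDimensional ℂ V]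
    (f f' : Module.End ℂ V) (k : ℕ) (hk : k ≠ 0) (hfk : f ^ k = 1) (hff' : f' * f = 1) :
    trace ℂ V f' = (starRingEnd ℂ) (trace ℂ V f) ∧
    (trace ℂ V f).re ≤ (finrank ℂ V : ℝ) ∧
    ((trace ℂ V f).re = (finrank ℂ V : ℝ) → trace ℂ V f = (finrank ℂ V : ℂ)) := by
  classical
  have hsq : Squarefree (Polynomial.X ^ k - Polynomial.C (1 : ℂ)) :=
    (Polynomial.separable_X_pow_sub_C (1 : ℂ) (by exact_mod_cast hk) one_ne_zero).squarefree
  have haev : Polynomial.aeval f (Polynomial.X ^ k - Polynomial.C (1 : ℂ)) = 0 := by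
    simp [hfk, Algebra.algebraMap_eq_smul_one]
  have hss : f.IsSemisimple := Module.End.isSemisimple_of_squarefree_aeval_eq_zero hsq haev
  have htop : ⨆ μ, f.maxGenEigenspace μ = ⊤ := Module.End.iSup_maxGenEigenspace_eq_top f
  have hds := DirectSum.isInternal_submodule_of_iSupIndep_of_iSup_eq_top
    f.independent_maxGenEigenspace htop
  have hfin : {μ : ℂ | f.maxGenEigenspace μ ≠ ⊥}.Finite :=
    WellFoundedGT.finite_ne_bot_of_iSupIndep f.independent_maxGenEigenspace
  have heig : ∀ μ : ℂ, f.maxGenEigenspace μ = f.eigenspace μ := fun μ ↦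
    hss.isFinitelySemisimple.maxGenEigenspace_eq_eigenspace μ
  have hcomm : Commute f f' := by
    have h2 : f * f' = 1 := mul_eq_one_comm.mpr hff'
    exact h2.trans hff'.symm
  have hmf : ∀ μ : ℂ, Set.MapsTo f (f.maxGenEigenspace μ) (f.maxGenEigenspace μ) :=
    fun μ ↦ f.mapsTo_maxGenEigenspace_of_comm rfl μ
  have hmf' : ∀ μ : ℂ, Set.MapsTo f' (f.maxGenEigenspace μ) (f.maxGenEigenspace μ) :=
    fun μ ↦ f.mapsTo_maxGenEigenspace_of_comm hcomm μ
  have hm1 : ∀ μ : ℂ, Set.MapsTo (1 : Module.End ℂ V) (f.maxGenEigenspace μ)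
      (f.maxGenEigenspace μ) := fun μ ↦ f.mapsTo_maxGenEigenspace_of_comm (Commute.one_right f) μ
  set S := hfin.toFinset with hS
  -- eigenvector facts
  have happ : ∀ μ ∈ S, ∀ x ∈ f.maxGenEigenspace μ, f x = μ • x := by
    intro μ _ x hx
    rw [heig] at hx
    exact Module.End.mem_eigenspace_iff.mp hx
  have hpow : ∀ μ ∈ S, μ ^ k = 1 := by
    intro μ hμ
    have hne : f.maxGenEigenspace μ ≠ ⊥ := by simpa [hS] using hμ
    obtain ⟨x, hx, hx0⟩ := Submodule.exists_mem_ne_zero_of_ne_bot hne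
    have hxx : f x = μ • x := happ μ hμ x hx
    have hiter : ∀ n : ℕ, (f ^ n) x = μ ^ n • x := by
      intro n
      induction n with
      | zero => simp
      | succ n ih =>
        rw [pow_succ, Module.End.mul_apply, hxx, map_smul, ih, pow_succ, mul_comm,
          mul_smul]
    have := hiter k
    rw [hfk] at this
    have h0 : (μ ^ k - 1) • x = 0 := by
      rw [sub_smul, one_smul, ← this]
      simp
    rcases smul_eq_zero.mp h0 with h | h
    · exact sub_eq_zero.mp h
    · exact absurd h hx0
  have habs : ∀ μ ∈ S, ‖μ‖ = 1 := by
    intro μ hμ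
    have := Complex.norm_eq_one_of_pow_eq_one (hpow μ hμ) hk
    simpa using this
  -- restrictions are scalars
  have hrf : ∀ μ ∈ S, f.restrict (hmf μ) = (μ • 1 : Module.End ℂ (f.maxGenEigenspace μ)) := by
    intro μ hμ
    ext x
    have := happ μ hμ x.1 x.2
    simp [LinearMap.restrict_apply, LinearMap.coe_restrict_apply, this]
    exact this
  have hrf' : ∀ μ ∈ S, f'.restrict (hmf' μ) = (μ⁻¹ • 1 : Module.End ℂ (f.maxGenEigenspace μ)) := by
    intro μ hμ
    have hμ0 : μ ≠ 0 := by
      intro h0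
      have := hpow μ hμ
      rw [h0, zero_pow hk] at this
      exact zero_ne_one this
    ext x
    have hxx : f x.1 = μ • x.1 := happ μ hμ x.1 x.2
    have : f' (f x.1) = x.1 := by
      have := congrArg (fun g : Module.End ℂ V => g x.1) hff'
      simpa using this
    rw [hxx, map_smul] at this
    have hfx : f' x.1 = μ⁻¹ • x.1 := by
      have h2 : μ⁻¹ • (μ • f' x.1) = μ⁻¹ • (x.1 : V) := congrArg _ this
      rwa [smul_smul, inv_mul_cancel₀ hμ0, one_smul] at h2
    simp [LinearMap.restrict_apply, LinearMap.coe_restrict_apply, hfx]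
    exact hfx
  have hr1 : ∀ μ : ℂ, (1 : Module.End ℂ V).restrict (hm1 μ) =
      (1 : Module.End ℂ (f.maxGenEigenspace μ)) := by
    intro μ; ext x; rfl
  -- trace formulas
  have tf : trace ℂ V f = ∑ μ ∈ S, μ * (finrank ℂ (f.maxGenEigenspace μ) : ℂ) := by
    rw [trace_eq_sum_trace_restrict' hds hfin hmf]
    refine Finset.sum_congr rfl fun μ hμ ↦ ?_
    rw [hrf μ hμ, map_smul, trace_one]
    simp [smul_eq_mul]
  have tf' : trace ℂ V f' = ∑ μ ∈ S, (starRingEnd ℂ) μ * (finrank ℂ (f.maxGenEigenspace μ) : ℂ) := by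
    rw [trace_eq_sum_trace_restrict' hds hfin hmf']
    refine Finset.sum_congr rfl fun μ hμ ↦ ?_
    rw [hrf' μ hμ, map_smul, trace_one, Complex.inv_eq_conj (habs μ hμ)]
    simp [smul_eq_mul]
  have tid : (finrank ℂ V : ℂ) = ∑ μ ∈ S, (finrank ℂ (f.maxGenEigenspace μ) : ℂ) := by
    have := trace_eq_sum_trace_restrict' hds hfin hm1
    rw [trace_one] at this
    rw [this]
    refine Finset.sum_congr rfl fun μ hμ ↦ ?_
    rw [hr1 μ, trace_one]
  refine ⟨?_, ?_, ?_⟩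
  · rw [tf, tf', map_sum]
    refine Finset.sum_congr rfl fun μ hμ ↦ ?_
    rw [map_mul]
    congr 1
    simp
  · have tre : (trace ℂ V f).re = ∑ μ ∈ S, μ.re * (finrank ℂ (f.maxGenEigenspace μ) : ℝ) := by
      rw [tf, Complex.re_sum]
      exact Finset.sum_congr rfl fun μ hμ ↦ by simp [Complex.mul_re]
    have tidR : (finrank ℂ V : ℝ) = ∑ μ ∈ S, (finrank ℂ (f.maxGenEigenspace μ) : ℝ) := by
      have := congrArg Complex.re tid
      simpa [Complex.re_sum] using this
    rw [tre, tidR]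
    refine Finset.sum_le_sum fun μ hμ ↦ ?_
    have h1 : μ.re ≤ 1 := (Complex.re_le_norm μ).trans (le_of_eq (habs μ hμ))
    calc μ.re * (finrank ℂ (f.maxGenEigenspace μ) : ℝ)
        ≤ 1 * (finrank ℂ (f.maxGenEigenspace μ) : ℝ) :=
          mul_le_mul_of_nonneg_right h1 (Nat.cast_nonneg _)
      _ = _ := one_mul _
  · intro he
    have tre : (trace ℂ V f).re = ∑ μ ∈ S, μ.re * (finrank ℂ (f.maxGenEigenspace μ) : ℝ) := by
      rw [tf, Complex.re_sum]
      exact Finset.sum_congr rfl fun μ hμ ↦ by simp [Complex.mul_re]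
    have tidR : (finrank ℂ V : ℝ) = ∑ μ ∈ S, (finrank ℂ (f.maxGenEigenspace μ) : ℝ) := by
      have := congrArg Complex.re tid
      simpa [Complex.re_sum] using this
    rw [tre, tidR] at he
    have hle : ∀ μ ∈ S, μ.re * (finrank ℂ (f.maxGenEigenspace μ) : ℝ) ≤
        (finrank ℂ (f.maxGenEigenspace μ) : ℝ) := by
      intro μ hμ
      have h1 : μ.re ≤ 1 := (Complex.re_le_norm μ).trans (le_of_eq (habs μ hμ))
      calc μ.re * (finrank ℂ (f.maxGenEigenspace μ) : ℝ)
          ≤ 1 * (finrank ℂ (f.maxGenEigenspace μ) : ℝ) :=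
            mul_le_mul_of_nonneg_right h1 (Nat.cast_nonneg _)
        _ = _ := one_mul _
    have heach := (Finset.sum_eq_sum_iff_of_le hle).mp he
    have hone : ∀ μ ∈ S, μ = 1 := by
      intro μ hμ
      have hne : f.maxGenEigenspace μ ≠ ⊥ := by simpa [hS] using hμ
      have hnt : Nontrivial (f.maxGenEigenspace μ) := Submodule.nontrivial_iff_ne_bot.mpr hne
      have hpos : 0 < finrank ℂ (f.maxGenEigenspace μ) := finrank_pos
      have hn0 : (finrank ℂ (f.maxGenEigenspace μ) : ℝ) ≠ 0 := by positivity
      have hreμ : μ.re = 1 := by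
        have h3 := heach μ hμ
        have h4 : (μ.re - 1) * (finrank ℂ (f.maxGenEigenspace μ) : ℝ) = 0 := by
          rw [sub_mul, h3, one_mul, sub_self]
        rcases mul_eq_zero.mp h4 with h | h
        · linarith [sub_eq_zero.mp h]
        · exact absurd h hn0
      have habsμ := habs μ hμ
      have hsq : μ.re ^ 2 + μ.im ^ 2 = 1 := by
        have := Complex.sq_norm μ
        rw [habsμ] at this
        simpa [Complex.normSq_apply, sq] using this.symm
      have him : μ.im = 0 := by nlinarith
      exact Complex.ext hreμ him
    rw [tf, tid]
    exact Finset.sum_congr rfl fun μ hμ ↦ by rw [hone μ hμ, one_mul]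

open CategoryTheory

theorem stmt8 {G : Type} [Group G] [Fintype G] (V W : FDRep ℂ G)
    [Simple V] [Simple W]
    (hV : V.character ≠ fun _ => 1) (hW : W.character ≠ fun _ => 1)
    (h : (1 / (W.character 1 * (Fintype.card G : ℂ))) *
        ∑ s : G, ((‖V.character s‖ : ℂ)) ^ 2 * W.character s = 1) :
    ∀ s : G, V.character s ≠ 0 → W.character s = W.character 1 := by
  classical
  -- apply aux_trace to both representations
  have keyV : ∀ s : G, V.character s⁻¹ = (starRingEnd ℂ) (V.character s) := by
    intro s
    exact (aux_trace (V.ρ s) (V.ρ s⁻¹) (orderOf s) (orderOf_pos s).ne'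
      (by rw [← map_pow, pow_orderOf_eq_one, map_one])
      (by rw [← map_mul, inv_mul_cancel, map_one])).1
  have keyW : ∀ s : G, (W.character s).re ≤ (finrank ℂ W : ℝ) ∧
      ((W.character s).re = (finrank ℂ W : ℝ) → W.character s = (finrank ℂ W : ℂ)) := by
    intro s
    exact (aux_trace (W.ρ s) (W.ρ s⁻¹) (orderOf s) (orderOf_pos s).ne'
      (by rw [← map_pow, pow_orderOf_eq_one, map_one])
      (by rw [← map_mul, inv_mul_cancel, map_one])).2
  -- orthogonality: sum of |χ_V|² equals |G|
  letI : Invertible ((Nat.card G : ℂ)) :=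
    invertibleOfNonzero (Nat.cast_ne_zero.mpr Nat.card_pos.ne')
  have horth := FDRep.char_orthonormal (k := ℂ) V V
  rw [if_pos ⟨Iso.refl V⟩] at horth
  have hsum : ∑ s : G, V.character s * V.character s⁻¹ = (Fintype.card G : ℂ) := by
    have h2 := congrArg (fun z => (Nat.card G : ℂ) * z) horth
    simp only [← mul_assoc, mul_inv_cancel₀ ((Nat.cast_ne_zero (R := ℂ)).mpr (Nat.card_pos (α := G)).ne'), one_mul] at h2
    simpa [Nat.card_eq_fintype_card] using h2
  have hA : ∑ s : G, ((‖V.character s‖ : ℂ)) ^ 2 = (Fintype.card G : ℂ) := by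
    rw [← hsum]
    refine Finset.sum_congr rfl fun s _ ↦ ?_
    rw [keyV s, Complex.mul_conj]
    norm_cast
    exact Complex.sq_norm _
  -- denominator nonzero, clear it in h
  have hd0 : W.character 1 * (Fintype.card G : ℂ) ≠ 0 := by
    intro h0
    rw [h0, div_zero, zero_mul] at h
    exact one_ne_zero h.symm
  have hsum2 : ∑ s : G, ((‖V.character s‖ : ℂ)) ^ 2 * W.character s =
      W.character 1 * (Fintype.card G : ℂ) := by
    rw [one_div, inv_mul_eq_div, div_eq_one_iff_eq hd0] at h
    exact h
  have hchar1 : W.character 1 = (finrank ℂ W : ℂ) := by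
    rw [FDRep.char_one]
  -- real parts
  have hre : ∑ s : G, (‖V.character s‖) ^ 2 * (W.character s).re =
      (finrank ℂ W : ℝ) * (Fintype.card G : ℝ) := by
    have h2 := congrArg Complex.re hsum2
    rw [Complex.re_sum] at h2
    simp only [← Complex.ofReal_pow, Complex.mul_re, Complex.ofReal_re, Complex.ofReal_im,
      Complex.natCast_re, Complex.natCast_im, zero_mul, mul_zero, sub_zero, hchar1] at h2
    exact h2
  have hAre : ∑ s : G, (‖V.character s‖) ^ 2 = (Fintype.card G : ℝ) := by
    have h2 := congrArg Complex.re hA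
    rw [Complex.re_sum] at h2
    simpa [← Complex.ofReal_pow] using h2
  -- equality case of sum inequality
  have hle : ∀ s ∈ Finset.univ (α := G),
      (‖V.character s‖) ^ 2 * (W.character s).re ≤
      (‖V.character s‖) ^ 2 * (finrank ℂ W : ℝ) := fun s _ ↦
    mul_le_mul_of_nonneg_left (keyW s).1 (sq_nonneg _)
  have heq : ∑ s : G, (‖V.character s‖) ^ 2 * (W.character s).re =
      ∑ s : G, (‖V.character s‖) ^ 2 * (finrank ℂ W : ℝ) := by
    rw [hre, ← Finset.sum_mul, hAre, mul_comm]
  have heach := (Finset.sum_eq_sum_iff_of_le hle).mp heq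
  intro s hs
  have ha0 : (‖V.character s‖) ^ 2 ≠ 0 := by
    simpa using hs
  have hres : (W.character s).re = (finrank ℂ W : ℝ) :=
    mul_left_cancel₀ ha0 (heach s (Finset.mem_univ s))
  rw [hchar1]
  exact (keyW s).2 hres
end

section
/- Let λ_1 ≥ λ_2 ≥ ⋯ ≥ λ_n be real numbers with ∑_{j=1}^n λ_j = 0, not all zero, and let ν_1, …, ν_n ≥ 0 satisfy ∑_{j=k}^n ν_j < ((n−k+1)/n)·∑_{j=1}^n ν_j for all 2 ≤ k ≤ n, with ∑_j ν_j > 0. Then ∑_{j=1}^n λ_j ν_j > 0. -/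
theorem stmt19 {n : ℕ} (hn : 0 < n) (lam nu : Fin n → ℝ)
    (hmono : ∀ i j : Fin n, i ≤ j → lam j ≤ lam i)
    (hsum : ∑ j, lam j = 0) (hne : lam ≠ 0)
    (hnu : ∀ j, 0 ≤ nu j) (hnupos : 0 < ∑ j, nu j)
    (hpartial : ∀ k : Fin n, 1 ≤ (k : ℕ) →
      ∑ j ∈ Finset.univ.filter (fun j => k ≤ j), nu j
        < (((n : ℝ) - (k : ℕ)) / n) * ∑ j, nu j) :
    0 < ∑ j, lam j * nu j := by
  classical
  set S := ∑ j, nu j with hSdef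
  have hnR : (0:ℝ) < n := by exact_mod_cast hn
  set L : ℕ → ℝ := fun i => if h : i < n then lam ⟨i,h⟩ else 0 with hLdef
  set N : ℕ → ℝ := fun i => if h : i < n then nu ⟨i,h⟩ else 0 with hNdef
  set g : ℕ → ℝ := fun i => N i - S / n with hgdef
  have hLval : ∀ i : Fin n, L i = lam i := by
    intro i; simp [hLdef, i.isLt]
  have hNval : ∀ i : Fin n, N i = nu i := by
    intro i; simp [hNdef, i.isLt]
  have hLsum : ∑ i ∈ Finset.range n, L i = 0 := by
    rw [← Fin.sum_univ_eq_sum_range]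
    rw [Finset.sum_congr rfl (fun i _ => hLval i)]
    exact hsum
  have hNsum : ∑ i ∈ Finset.range n, N i = S := by
    rw [← Fin.sum_univ_eq_sum_range]
    rw [Finset.sum_congr rfl (fun i _ => hNval i)]
  have hgsum : ∑ i ∈ Finset.range n, g i = 0 := by
    simp only [hgdef, Finset.sum_sub_distrib, hNsum, Finset.sum_const,
      Finset.card_range, nsmul_eq_mul]
    field_simp
    ring
  -- prefix sums are positive
  have hprefix : ∀ k : Fin n, 1 ≤ (k:ℕ) →
      0 < ∑ i ∈ Finset.range (k:ℕ), g i := by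
    intro k hk
    have h1 : ∑ i ∈ Finset.range (k:ℕ), N i
        = ∑ j ∈ Finset.univ.filter (fun j : Fin n => j < k), nu j := by
      refine Finset.sum_bij' (fun a ha => (⟨a, lt_of_lt_of_le (Finset.mem_range.mp ha) k.isLt.le⟩ : Fin n))
        (fun j _ => (j:ℕ)) ?_ ?_ ?_ ?_ ?_
      · intro a ha
        simp only [Finset.mem_filter, Finset.mem_univ, true_and, Fin.lt_def]
        exact Finset.mem_range.mp ha
      · intro j hj
        simp only [Finset.mem_filter, Finset.mem_univ, true_and, Fin.lt_def] at hj
        exact Finset.mem_range.mpr hj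
      · intro a ha; rfl
      · intro j hj; rfl
      · intro a ha
        have h' : a < n := lt_of_lt_of_le (Finset.mem_range.mp ha) k.isLt.le
        simp [hNdef, h']
    have hsplit : ∑ j ∈ Finset.univ.filter (fun j : Fin n => j < k), nu j
        + ∑ j ∈ Finset.univ.filter (fun j : Fin n => k ≤ j), nu j = S := by
      rw [hSdef]
      rw [← Finset.sum_filter_add_sum_filter_not Finset.univ (fun j : Fin n => k ≤ j) nu]
      rw [add_comm]
      congr 1
      apply Finset.sum_congr _ (fun _ _ => rfl)
      congr 1
      ext j
      simp [not_le]
    have htail := hpartial k hk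
    have hNk : ((k:ℕ):ℝ) * (S / n) < ∑ i ∈ Finset.range (k:ℕ), N i := by
      rw [h1]
      have : ∑ j ∈ Finset.univ.filter (fun j : Fin n => j < k), nu j
          = S - ∑ j ∈ Finset.univ.filter (fun j : Fin n => k ≤ j), nu j := by
        linarith [hsplit]
      rw [this]
      have hcast : (((n:ℝ) - (k:ℕ)) / n) * S = S - ((k:ℕ):ℝ) * (S / n) := by
        field_simp
      linarith [htail, hcast ▸ htail]
    simp only [hgdef, Finset.sum_sub_distrib, Finset.sum_const, Finset.card_range,
      nsmul_eq_mul]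
    linarith
  -- Abel summation
  have habel := Finset.sum_range_by_parts L g n
  simp only [smul_eq_mul, hgsum, mul_zero, zero_sub] at habel
  -- main sum equals the Abel sum
  have hmain : ∑ j, lam j * nu j = ∑ i ∈ Finset.range n, L i * g i := by
    have : ∑ i ∈ Finset.range n, L i * g i
        = ∑ i ∈ Finset.range n, L i * N i - (S/n) * ∑ i ∈ Finset.range n, L i := by
      rw [Finset.mul_sum]
      rw [← Finset.sum_sub_distrib]
      apply Finset.sum_congr rfl
      intro i _
      simp [hgdef]; ring
    rw [this, hLsum, mul_zero, sub_zero, ← Fin.sum_univ_eq_sum_range]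
    apply Finset.sum_congr rfl
    intro i _
    rw [hLval, hNval]
  rw [hmain, habel]
  rw [← Finset.sum_neg_distrib]
  -- each term nonneg, one positive
  have hterm : ∀ i ∈ Finset.range (n-1),
      0 ≤ -((L (i+1) - L i) * ∑ j ∈ Finset.range (i+1), g j) := by
    intro i hi
    rw [Finset.mem_range] at hi
    have h1 : i + 1 < n := by omega
    have h0 : i < n := by omega
    have hL' : L (i+1) ≤ L i := by
      have := hmono ⟨i, h0⟩ ⟨i+1, h1⟩ (by simp)
      simpa [hLdef, h0, h1] using this
    have hP : 0 < ∑ j ∈ Finset.range (i+1), g j := by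
      have := hprefix ⟨i+1, h1⟩ (by simp)
      simpa using this
    nlinarith
  -- n ≥ 2
  have hn2 : 2 ≤ n := by
    by_contra h
    have hn1 : n = 1 := by omega
    subst hn1
    apply hne
    funext j
    have : j = 0 := Subsingleton.elim _ _
    rw [this]
    simpa using hsum
  -- lam 0 > 0
  have hfirst : 0 < lam ⟨0, hn⟩ := by
    by_contra h
    push_neg at h
    apply hne
    have hall : ∀ j, lam j ≤ 0 := fun j => le_trans (hmono ⟨0,hn⟩ j (by simp [Fin.le_def])) h
    funext j
    have := (Finset.sum_eq_zero_iff_of_nonpos (fun j _ => hall j)).mp hsum j (Finset.mem_univ j)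
    simpa using this
  have hlastlt : lam ⟨n-1, by omega⟩ < 0 := by
    by_contra h
    push_neg at h
    apply hne
    have hall : ∀ j, 0 ≤ lam j := fun j =>
      le_trans h (hmono j ⟨n-1, by omega⟩ (by simp [Fin.le_def]; omega))
    funext j
    have := (Finset.sum_eq_zero_iff_of_nonneg (fun j _ => hall j)).mp hsum j (Finset.mem_univ j)
    simpa using this
  -- exists strict drop
  have hdrop : ∃ i ∈ Finset.range (n-1), L (i+1) < L i := by
    by_contra h
    push_neg at h
    have hmonoL : ∀ m, m ≤ n - 1 → L 0 ≤ L m := by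
      intro m hm
      induction m with
      | zero => exact le_rfl
      | succ k ih =>
        have hk : k ≤ n - 1 := by omega
        have := h k (Finset.mem_range.mpr (by omega))
        exact le_trans (ih hk) this
    have := hmonoL (n-1) le_rfl
    have hL0 : L 0 = lam ⟨0, hn⟩ := by simp [hLdef, hn]
    have hLn : L (n-1) = lam ⟨n-1, by omega⟩ := by simp [hLdef, Nat.sub_lt hn one_pos]
    rw [hL0, hLn] at this
    linarith
  obtain ⟨i, hi, hdrop⟩ := hdrop
  apply Finset.sum_pos' hterm
  refine ⟨i, hi, ?_⟩
  rw [Finset.mem_range] at hi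
  have h1 : i + 1 < n := by omega
  have hP : 0 < ∑ j ∈ Finset.range (i+1), g j := by
    have := hprefix ⟨i+1, h1⟩ (by simp)
    simpa using this
  nlinarith
end
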